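/- Let ρₙ : {0,...,n+1} → {0,...,n} be defined by ρₙ(a) = a for a ≤ n and ρₙ(n+1) = n. With τₙ, τₙ₊₁ the substitutions defined by τ_m(a) = a0(a+1) for a ≠ m and τ_m(m) = m0m on {0,...,m}, one has ρₙ ∘ τₙ₊₁ = τₙ ∘ ρₙ as maps on letters (extending ρₙ letter-by-letter to words); consequently ρₙ induces a factor map from the subshift X_{τₙ₊₁} onto X_{τₙ} commuting with the shifts. -/

import Mathlib

/-- Extension of a substitution to finite words, by concatenation. -/
def substWord {A : Type*} (τ : A → List A) (w : List A) : List A :=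
  (w.map τ).flatten

/-- The shift map on two-sided sequences. -/
def shift {A : Type*} (x : ℤ → A) : ℤ → A := fun i => x (i + 1)

/-- Extension of a constant-length-`p` substitution to two-sided sequences:
the block `τ(x_q)` occupies coordinates `[pq, pq + p)` of `τ(x)`. -/
def substExt {A : Type*} [Inhabited A] (τ : A → List A) (p : ℕ) (x : ℤ → A) :
    ℤ → A :=
  fun i => (τ (x (i / (p : ℤ)))).getD (i % (p : ℤ)).toNat default

/-- A substitution is primitive if some power sends every letter to a word
containing every letter. -/
def IsPrimitive {A : Type*} (τ : A → List A) : Prop :=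
  ∃ n : ℕ, ∀ a b : A, a ∈ (substWord τ)^[n] [b]

/-- The subshift generated by `τ`: sequences all of whose finite subwords occur
in some `τⁿ(a)`. -/
def XSet {A : Type*} (τ : A → List A) : Set (ℤ → A) :=
  {x | ∀ (i : ℤ) (l : ℕ), ∃ (n : ℕ) (c : A),
    (List.ofFn fun j : Fin l => x (i + (j : ℤ))) <:+: (substWord τ)^[n] [c]}

/-- Proximality of a pair for the shift on `A^ℤ` (with the product topology):
arbitrarily large central windows agree at some arbitrarily late time. -/
def IsProximalPair {A : Type*} (x y : ℤ → A) : Prop :=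
  ∀ N M : ℕ, ∃ n : ℕ, M ≤ n ∧ ∀ j : ℤ, |j| ≤ (N : ℤ) → x (j + n) = y (j + n)

/-- A Li–Yorke pair for the shift on `A^ℤ`: proximal but not asymptotic
(the two sequences differ at infinitely many coordinates). -/
def IsLiYorkePair {A : Type*} (x y : ℤ → A) : Prop :=
  IsProximalPair x y ∧ {m : ℤ | x m ≠ y m}.Infinite

/-- The substitution `τₘ` on `{0,…,m}`: `τₘ(a) = a 0 (a+1)` for `a ≠ m` and
`τₘ(m) = m 0 m`. -/
def tauN (m : ℕ) : Fin (m + 1) → List (Fin (m + 1)) :=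
  fun a => [a, ⟨0, Nat.succ_pos m⟩, ⟨min (a.1 + 1) m, by omega⟩]

/-- The letter projection `ρₙ : {0,…,n+1} → {0,…,n}`, identity on `{0,…,n}`
and sending `n+1` to `n`. -/
def rhoN (n : ℕ) : Fin (n + 2) → Fin (n + 1) :=
  fun a => ⟨min a.1 n, by omega⟩

/-! The identity `ρₙ ∘ τₙ₊₁ = τₙ ∘ ρₙ` is a check on letters. It makes `ρₙ` send words of the
language of `τₙ₊₁` to words of the language of `τₙ`, and conversely every subword of
`τₙᵏ(ρₙ c) = ρₙ(τₙ₊₁ᵏ(c))` is the image of a subword of `τₙ₊₁ᵏ(c)`. Lifting the central windows of a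
point of `X_{τₙ}` in this way and passing to a limit point in the compact space `{0,…,n+1}^ℤ` gives a
preimage in `X_{τₙ₊₁}`. -/

variable {A B : Type*}

def substLanguage (τ : A → List A) : Set (List A) :=
  {w | ∃ (k : ℕ) (c : A), w <:+: (substWord τ)^[k] [c]}

theorem substLanguage_of_infix {τ : A → List A} {v w : List A} (hvw : v <:+: w)
    (hw : w ∈ substLanguage τ) : v ∈ substLanguage τ := by
  obtain ⟨k, c, h⟩ := hw
  exact ⟨k, c, hvw.trans h⟩

theorem semiconj_map_substWord {τ : A → List A} {σ : B → List B} {f : A → B}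
    (h : ∀ a, (τ a).map f = σ (f a)) :
    Function.Semiconj (List.map f) (substWord τ) (substWord σ) := fun w => by
  simp [substWord, List.map_flatten, Function.comp_def, h]

theorem map_mem_substLanguage {τ : A → List A} {σ : B → List B} {f : A → B}
    (h : ∀ a, (τ a).map f = σ (f a)) {w : List A} (hw : w ∈ substLanguage τ) :
    w.map f ∈ substLanguage σ := by
  obtain ⟨k, c, hwc⟩ := hw
  refine ⟨k, f c, ?_⟩
  simpa [((semiconj_map_substWord h).iterate_right k).eq] using hwc.map f

theorem exists_mem_substLanguage_map_eq {τ : A → List A} {σ : B → List B} {f : A → B}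
    (h : ∀ a, (τ a).map f = σ (f a)) (hf : Function.Surjective f) {w : List B}
    (hw : w ∈ substLanguage σ) : ∃ w' ∈ substLanguage τ, w'.map f = w := by
  obtain ⟨k, c, hwc⟩ := hw
  obtain ⟨c', rfl⟩ := hf c
  rw [← List.map_singleton, ← ((semiconj_map_substWord h).iterate_right k).eq,
    List.infix_map_iff] at hwc
  obtain ⟨w', hw', rfl⟩ := hwc
  exact ⟨w', ⟨k, c', hw'⟩, rfl⟩

def window (x : ℤ → A) (i : ℤ) (l : ℕ) : List A :=
  List.ofFn fun j : Fin l => x (i + j)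

theorem mem_XSet_iff {τ : A → List A} {x : ℤ → A} :
    x ∈ XSet τ ↔ ∀ i l, window x i l ∈ substLanguage τ := Iff.rfl

theorem map_window (f : A → B) (x : ℤ → A) (i : ℤ) (l : ℕ) :
    (window x i l).map f = window (fun j => f (x j)) i l := by
  simp [window, List.map_ofFn, Function.comp_def]

theorem window_infix_window (x : ℤ → A) {i i' : ℤ} {l l' : ℕ}
    (h₁ : i' ≤ i) (h₂ : i + l ≤ i' + l') : window x i l <:+: window x i' l' := by
  have hw : window x i l = ((window x i' l').drop (i - i').toNat).take l := by
    apply List.ext_getElem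
    · simp only [window, List.length_ofFn, List.length_take, List.length_drop, left_eq_inf]
      omega
    · intro m _ _
      simp only [window, List.getElem_take, List.getElem_drop, List.getElem_ofFn]
      congr 1
      omega
  rw [hw]
  exact (List.take_prefix _ _).isInfix.trans (List.drop_suffix _ _).isInfix

theorem apply_eq_of_window_eq {x y : ℤ → A} {i j : ℤ} {l : ℕ}
    (h : window x i l = window y i l) (hij : i ≤ j) (hjl : j < i + l) : x j = y j := by
  have := congrFun (List.ofFn_injective h) ⟨(j - i).toNat, by omega⟩
  simp only at this
  rwa [show i + ((j - i).toNat : ℤ) = j by omega] at this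

theorem exists_window_eq [Nonempty A] (w : List A) (i : ℤ) :
    ∃ x : ℤ → A, window x i w.length = w := by
  inhabit A
  refine ⟨fun j => w.getD (j - i).toNat default, List.ext_getElem (by simp [window]) ?_⟩
  intro m hm _
  simp [window]

theorem isClosed_setOf_window [TopologicalSpace A] [DiscreteTopology A] (P : List A → Prop)
    (i : ℤ) (l : ℕ) : IsClosed {y : ℤ → A | P (window y i l)} := by
  have hcont : Continuous fun (y : ℤ → A) (j : Fin l) => y (i + j) := by fun_prop
  exact (isClosed_discrete {v : Fin l → A | P (List.ofFn v)}).preimage hcont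

theorem comp_mem_XSet {τ : A → List A} {σ : B → List B} {f : A → B}
    (h : ∀ a, (τ a).map f = σ (f a)) {y : ℤ → A} (hy : y ∈ XSet τ) :
    (fun i => f (y i)) ∈ XSet σ :=
  mem_XSet_iff.2 fun i l => map_window f y i l ▸ map_mem_substLanguage h (hy i l)

theorem exists_mem_XSet_comp_eq [Finite A] {τ : A → List A} {σ : B → List B} {f : A → B}
    (h : ∀ a, (τ a).map f = σ (f a)) (hf : Function.Surjective f) {x : ℤ → B}
    (hx : x ∈ XSet σ) : ∃ y ∈ XSet τ, (fun i => f (y i)) = x := by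
  -- König's lemma: lifts of ever longer central windows of `x` have a limit point in `A^ℤ`.
  let _ : TopologicalSpace A := ⊥
  have : DiscreteTopology A := ⟨rfl⟩
  have : Nonempty A := ⟨(hf (x 0)).choose⟩
  let V : ℕ → Set (ℤ → A) := fun l =>
    {y | (∀ j : ℤ, -(l : ℤ) ≤ j → j ≤ l → f (y j) = x j) ∧
      window y (-l) (2 * l + 1) ∈ substLanguage τ}
  have hV_closed (l : ℕ) : IsClosed (V l) := by
    refine .inter ?_ (isClosed_setOf_window (· ∈ substLanguage τ) _ _)
    show IsClosed {y : ℤ → A | ∀ j : ℤ, -(l : ℤ) ≤ j → j ≤ l → f (y j) = x j}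
    simp only [Set.ofPred_forall]
    exact isClosed_iInter fun j => isClosed_iInter fun _ => isClosed_iInter fun _ =>
      (isClosed_discrete {a : A | f a = x j}).preimage (continuous_apply (A := fun _ => A) j)
  have hV_anti (l : ℕ) : V (l + 1) ⊆ V l := fun y ⟨hfy, hy⟩ =>
    ⟨fun j hj hj' => hfy j (by omega) (by omega),
      substLanguage_of_infix (window_infix_window y (by omega) (by omega)) hy⟩
  have hV_nonempty (l : ℕ) : (V l).Nonempty := by
    obtain ⟨w, hw, hwx⟩ := exists_mem_substLanguage_map_eq h hf (hx (-l) (2 * l + 1))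
    have hlen : w.length = 2 * l + 1 := by simpa using congrArg List.length hwx
    obtain ⟨y, hy⟩ := exists_window_eq w (-l)
    rw [hlen] at hy
    rw [← hy, map_window] at hwx
    exact ⟨y, fun j hj hj' => apply_eq_of_window_eq hwx (by omega) (by omega), hy ▸ hw⟩
  obtain ⟨y, hy⟩ := IsCompact.nonempty_iInter_of_sequence_nonempty_isCompact_isClosed
    V hV_anti hV_nonempty (hV_closed 0).isCompact hV_closed
  rw [Set.mem_iInter] at hy
  refine ⟨y, fun i l => ?_, funext fun j => (hy j.natAbs).1 j (by omega) (by omega)⟩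
  exact substLanguage_of_infix (window_infix_window y (by omega) (by omega))
    (hy (i.natAbs + l)).2

theorem image_comp_XSet [Finite A] {τ : A → List A} {σ : B → List B} {f : A → B}
    (h : ∀ a, (τ a).map f = σ (f a)) (hf : Function.Surjective f) :
    (fun y : ℤ → A => fun i => f (y i)) '' XSet τ = XSet σ :=
  subset_antisymm (Set.image_subset_iff.2 fun _ => comp_mem_XSet h)
    fun _ hx => exists_mem_XSet_comp_eq h hf hx

theorem tauN_map_rhoN (n : ℕ) (a : Fin (n + 2)) :
    (tauN (n + 1) a).map (rhoN n) = tauN n (rhoN n a) := by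
  simp only [tauN, rhoN, List.map_cons, List.map_nil, List.cons.injEq, and_true]
  exact ⟨trivial, Fin.ext (by simp), Fin.ext (by simp only []; omega)⟩

theorem rhoN_surjective (n : ℕ) : Function.Surjective (rhoN n) :=
  fun b => ⟨b.castSucc, Fin.ext (by simp [rhoN]; omega)⟩

theorem stmt18_general (n : ℕ) :
    (∀ a : Fin (n + 2), (tauN (n + 1) a).map (rhoN n) = tauN n (rhoN n a)) ∧
      Continuous (fun x : ℤ → Fin (n + 2) => fun i => rhoN n (x i)) ∧
      (fun x : ℤ → Fin (n + 2) => fun i => rhoN n (x i)) '' XSet (tauN (n + 1))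
        = XSet (tauN n) ∧
      (∀ x : ℤ → Fin (n + 2),
        (fun i => rhoN n (shift x i)) = shift (fun i => rhoN n (x i))) :=
  ⟨tauN_map_rhoN n, by fun_prop, image_comp_XSet (tauN_map_rhoN n) (rhoN_surjective n),
    fun _ => rfl⟩

/-- `ρₙ ∘ τₙ₊₁ = τₙ ∘ ρₙ` on letters, and hence `ρₙ` (applied coordinatewise)
induces a factor map from `X_{τₙ₊₁}` onto `X_{τₙ}` commuting with the
shifts. -/
theorem stmt18 (n : ℕ) (hn : 1 ≤ n) :
    (∀ a : Fin (n + 2), (tauN (n + 1) a).map (rhoN n) = tauN n (rhoN n a)) ∧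
      Continuous (fun x : ℤ → Fin (n + 2) => fun i => rhoN n (x i)) ∧
      (fun x : ℤ → Fin (n + 2) => fun i => rhoN n (x i)) '' XSet (tauN (n + 1))
        = XSet (tauN n) ∧
      (∀ x : ℤ → Fin (n + 2),
        (fun i => rhoN n (shift x i)) = shift (fun i => rhoN n (x i))) :=
  stmt18_general n
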